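/- arXiv:1701.06491 — 5 statements merged into one kernel-verified Lean document; each statement's English description precedes it below -/
import Mathlib

section
/- If f is a standard interference function, then for every x ≥ 0 the map h ↦ f(hx)/h on ℝ₊₊ is strictly decreasing: 0 < α₁ < α₂ implies f(α₁x)/α₁ > f(α₂x)/α₂ > 0. -/
theorem strictAntiOn_apply_smul_div_of_scalable {E : Type*} [AddCommMonoid E] [PartialOrder E]
    [Module ℝ E] [PosSMulMono ℝ E] (f : E → ℝ)
    (hscale : ∀ x : E, 0 ≤ x → ∀ α : ℝ, 1 < α → f (α • x) < α * f x) {x : E} (hx : 0 ≤ x) :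
    StrictAntiOn (fun h : ℝ => f (h • x) / h) (Set.Ioi 0) := by
  intro α₁ (h₁ : 0 < α₁) α₂ (h₂ : 0 < α₂) h₁₂
  have hscaled : f (α₂ • x) < α₂ / α₁ * f (α₁ • x) := by
    simpa only [smul_smul, div_mul_cancel₀ _ h₁.ne'] using
      hscale (α₁ • x) (smul_nonneg h₁.le hx) (α₂ / α₁) ((one_lt_div h₁).mpr h₁₂)
  calc f (α₂ • x) / α₂ < α₂ / α₁ * f (α₁ • x) / α₂ := div_lt_div_of_pos_right hscaled h₂
    _ = f (α₁ • x) / α₁ := by field_simp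

theorem stmt1_general {N : ℕ} (f : (Fin N → ℝ) → ℝ)
    (hpos : ∀ x : Fin N → ℝ, 0 ≤ x → 0 < f x)
    (hscale : ∀ x : Fin N → ℝ, 0 ≤ x → ∀ α : ℝ, 1 < α → f (α • x) < α * f x) :
    ∀ x : Fin N → ℝ, 0 ≤ x → ∀ α₁ α₂ : ℝ, 0 < α₁ → α₁ < α₂ →
      0 < f (α₂ • x) / α₂ ∧ f (α₂ • x) / α₂ < f (α₁ • x) / α₁ := by
  intro x hx α₁ α₂ h₁ h₁₂
  have h₂ : 0 < α₂ := h₁.trans h₁₂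
  exact ⟨div_pos (hpos _ (smul_nonneg h₂.le hx)) h₂,
    strictAntiOn_apply_smul_div_of_scalable f hscale hx h₁ h₂ h₁₂⟩

/-- For a standard interference function `f` and `x ≥ 0`, the map
`h ↦ f (h • x) / h` is strictly decreasing on `ℝ₊₊`:
`0 < α₁ < α₂` implies `f (α₁ • x) / α₁ > f (α₂ • x) / α₂ > 0`. -/
theorem stmt1 {N : ℕ} (f : (Fin N → ℝ) → ℝ)
    (hpos : ∀ x : Fin N → ℝ, 0 ≤ x → 0 < f x)
    (hscale : ∀ x : Fin N → ℝ, 0 ≤ x → ∀ α : ℝ, 1 < α → f (α • x) < α * f x)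
    (hmono : ∀ x y : Fin N → ℝ, 0 ≤ y → y ≤ x → f y ≤ f x) :
    ∀ x : Fin N → ℝ, 0 ≤ x → ∀ α₁ α₂ : ℝ, 0 < α₁ → α₁ < α₂ →
      0 < f (α₂ • x) / α₂ ∧ f (α₂ • x) / α₂ < f (α₁ • x) / α₁ :=
  stmt1_general f hpos hscale
end

section
/- If f is a standard interference function, then its asymptotic function f_∞(x) := inf{liminf_n f(hₙxₙ)/hₙ : hₙ → ∞, xₙ → x} satisfies, for every x in the nonnegative orthant, f_∞(x) = lim_{h→∞} f(hx)/h. -/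
/-!
Along a sequence `hₙ → ∞`, `xₙ → x` in the orthant, eventually `c • x ≤ xₙ` for each `c < 1`,
so monotonicity gives `f(hₙ xₙ)/hₙ ≥ c · f((c hₙ) x)/(c hₙ) → c L`; letting `c → 1` shows that
the ray `hₙ = n`, `xₙ = x` realises the infimum. Scalability keeps `f(hₙ xₙ)/hₙ` bounded above,
so the real-valued `liminf` is not a junk value.
-/

open Filter Topology Set

section

variable {ι α : Type*} {f : (ι → ℝ) → ℝ} {l : Filter α}

lemma apply_smul_le_mul_apply
    (hscale : ∀ x : ι → ℝ, 0 ≤ x → ∀ α : ℝ, 1 < α → f (α • x) < α * f x)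
    {y : ι → ℝ} (hy : 0 ≤ y) {h : ℝ} (h1 : 1 ≤ h) : f (h • y) ≤ h * f y := by
  rcases h1.eq_or_lt with rfl | h1
  · simp
  · exact (hscale y hy h h1).le

lemma eventually_smul_le_of_tendsto [Finite ι] {x : ι → ℝ} {xs : α → ι → ℝ}
    (hx : 0 ≤ x) (hxs0 : ∀ n, 0 ≤ xs n) (hxs : Tendsto xs l (𝓝 x)) {c : ℝ} (hc : c < 1) :
    ∀ᶠ n in l, c • x ≤ xs n := by
  simp only [Pi.le_def, Pi.smul_apply, smul_eq_mul, eventually_all]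
  intro i
  rcases (hx i).eq_or_lt with h0 | h0
  · exact Eventually.of_forall fun n => by simpa [← h0] using hxs0 n i
  · exact ((tendsto_pi_nhds.mp hxs i).eventually_const_lt
      (mul_lt_of_lt_one_left h0 hc)).mono fun _ h => h.le

lemma isBoundedUnder_le_div_of_tendsto [Finite ι]
    (hscale : ∀ x : ι → ℝ, 0 ≤ x → ∀ α : ℝ, 1 < α → f (α • x) < α * f x)
    (hmono : ∀ x y : ι → ℝ, 0 ≤ y → y ≤ x → f y ≤ f x)
    {x : ι → ℝ} (hx : 0 ≤ x) {hs : α → ℝ} {xs : α → ι → ℝ} (hhs : Tendsto hs l atTop)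
    (hxs0 : ∀ n, 0 ≤ xs n) (hxs : Tendsto xs l (𝓝 x)) :
    IsBoundedUnder (· ≤ ·) l fun n => f (hs n • xs n) / hs n := by
  have hx1 : 0 ≤ x + 1 := add_nonneg hx zero_le_one
  have hle : ∀ᶠ n in l, xs n ≤ x + 1 :=
    hxs (pi_Iic_mem_nhds fun i => by simp)
  refine ⟨f (x + 1), eventually_map.mpr ?_⟩
  filter_upwards [hhs.eventually_ge_atTop 1, hle] with n hn1 hn
  have hn0 : 0 < hs n := zero_lt_one.trans_le hn1
  rw [div_le_iff₀ hn0, mul_comm]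
  calc f (hs n • xs n) ≤ f (hs n • (x + 1)) :=
        hmono _ _ (smul_nonneg hn0.le (hxs0 n)) (smul_le_smul_of_nonneg_left hn hn0.le)
    _ ≤ hs n * f (x + 1) := apply_smul_le_mul_apply hscale hx1 hn1

lemma mul_le_liminf_div_of_tendsto [Finite ι] [l.NeBot]
    (hscale : ∀ x : ι → ℝ, 0 ≤ x → ∀ α : ℝ, 1 < α → f (α • x) < α * f x)
    (hmono : ∀ x y : ι → ℝ, 0 ≤ y → y ≤ x → f y ≤ f x)
    {x : ι → ℝ} (hx : 0 ≤ x) {L : ℝ} (hL : Tendsto (fun h : ℝ => f (h • x) / h) atTop (𝓝 L))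
    {hs : α → ℝ} {xs : α → ι → ℝ} (hhs : Tendsto hs l atTop)
    (hxs0 : ∀ n, 0 ≤ xs n) (hxs : Tendsto xs l (𝓝 x)) {c : ℝ} (hc : c ∈ Ioo 0 1) :
    c * L ≤ liminf (fun n => f (hs n • xs n) / hs n) l := by
  have hray : Tendsto (fun n => c * (f ((c * hs n) • x) / (c * hs n))) l (𝓝 (c * L)) :=
    (hL.comp (hhs.const_mul_atTop hc.1)).const_mul c
  have hcomp : ∀ᶠ n in l, c * (f ((c * hs n) • x) / (c * hs n)) ≤ f (hs n • xs n) / hs n := by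
    filter_upwards [hhs.eventually_gt_atTop 0, eventually_smul_le_of_tendsto hx hxs0 hxs hc.2]
      with n hn0 hn
    rw [← mul_div_assoc, mul_div_mul_left _ _ hc.1.ne', mul_comm c, ← smul_smul]
    gcongr
    exact hmono _ _ (smul_nonneg hn0.le (smul_nonneg hc.1.le hx))
      (smul_le_smul_of_nonneg_left hn hn0.le)
  rw [← hray.liminf_eq]
  exact liminf_le_liminf hcomp hray.isBoundedUnder_ge
    (isBoundedUnder_le_div_of_tendsto hscale hmono hx hhs hxs0 hxs).isCoboundedUnder_ge

lemma le_liminf_div_of_tendsto [Finite ι] [l.NeBot]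
    (hscale : ∀ x : ι → ℝ, 0 ≤ x → ∀ α : ℝ, 1 < α → f (α • x) < α * f x)
    (hmono : ∀ x y : ι → ℝ, 0 ≤ y → y ≤ x → f y ≤ f x)
    {x : ι → ℝ} (hx : 0 ≤ x) {L : ℝ} (hL : Tendsto (fun h : ℝ => f (h • x) / h) atTop (𝓝 L))
    {hs : α → ℝ} {xs : α → ι → ℝ} (hhs : Tendsto hs l atTop)
    (hxs0 : ∀ n, 0 ≤ xs n) (hxs : Tendsto xs l (𝓝 x)) :
    L ≤ liminf (fun n => f (hs n • xs n) / hs n) l := by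
  have hlim : Tendsto (fun c : ℝ => c * L) (𝓝[<] 1) (𝓝 L) := by
    simpa using (tendsto_id.mul_const L).mono_left (nhdsWithin_le_nhds (a := (1 : ℝ)))
  exact le_of_tendsto hlim <| eventually_of_mem (Ioo_mem_nhdsLT zero_lt_one) fun c hc =>
    mul_le_liminf_div_of_tendsto hscale hmono hx hL hhs hxs0 hxs hc

end

theorem stmt3_general {N : ℕ} (f : (Fin N → ℝ) → ℝ)
    (hscale : ∀ x : Fin N → ℝ, 0 ≤ x → ∀ α : ℝ, 1 < α → f (α • x) < α * f x)
    (hmono : ∀ x y : Fin N → ℝ, 0 ≤ y → y ≤ x → f y ≤ f x)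
    (x : Fin N → ℝ) (hx : 0 ≤ x) (L : ℝ)
    (hL : Tendsto (fun h : ℝ => f (h • x) / h) atTop (𝓝 L)) :
    sInf {l : ℝ | ∃ (hs : ℕ → ℝ) (xs : ℕ → Fin N → ℝ),
        Tendsto hs atTop atTop ∧ (∀ n, 0 ≤ xs n) ∧ Tendsto xs atTop (𝓝 x) ∧
        l = Filter.liminf (fun n => f (hs n • xs n) / hs n) atTop} = L := by
  refine IsLeast.csInf_eq ⟨?_, ?_⟩
  · exact ⟨(↑), fun _ => x, tendsto_natCast_atTop_atTop, fun _ => hx, tendsto_const_nhds,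
      (hL.comp tendsto_natCast_atTop_atTop).liminf_eq.symm⟩
  · rintro l ⟨hs, xs, hhs, hxs0, hxs, rfl⟩
    exact le_liminf_div_of_tendsto hscale hmono hx hL hhs hxs0 hxs

/-- For a standard interference function `f`, the asymptotic function
`f_∞(x) := inf { liminf_n f(hₙ • xₙ)/hₙ : hₙ → ∞, xₙ → x }` (with `xₙ` in the nonnegative
orthant, since `f` is extended by `+∞` outside it) equals `lim_{h→∞} f(h • x)/h` for every
`x` in the nonnegative orthant. -/
theorem stmt3 {N : ℕ} (f : (Fin N → ℝ) → ℝ)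
    (hpos : ∀ x : Fin N → ℝ, 0 ≤ x → 0 < f x)
    (hscale : ∀ x : Fin N → ℝ, 0 ≤ x → ∀ α : ℝ, 1 < α → f (α • x) < α * f x)
    (hmono : ∀ x y : Fin N → ℝ, 0 ≤ y → y ≤ x → f y ≤ f x)
    (x : Fin N → ℝ) (hx : 0 ≤ x) (L : ℝ)
    (hL : Tendsto (fun h : ℝ => f (h • x) / h) atTop (𝓝 L)) :
    sInf {l : ℝ | ∃ (hs : ℕ → ℝ) (xs : ℕ → Fin N → ℝ),
        Tendsto hs atTop atTop ∧ (∀ n, 0 ≤ xs n) ∧ Tendsto xs atTop (𝓝 x) ∧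
        l = Filter.liminf (fun n => f (hs n • xs n) / hs n) atTop} = L :=
  stmt3_general f hscale hmono x hx L hL
end

section
/- If a standard interference function f is continuous on the nonnegative orthant, then its asymptotic function f_∞(x) = lim_{h→∞} f(hx)/h is continuous on the nonnegative orthant. -/
/-!
Scalability makes `h ↦ f (h • x) / h` decreasing, so `F` is the infimum of the continuous
functions `y ↦ f (h • y) / h` and hence upper semicontinuous. Lower semicontinuity comes from
monotonicity and positive homogeneity of `F`: near `x` in the orthant every `y` dominates
`c • x` for a fixed `c < 1`, so `F y ≥ c * F x`.
-/

open Filter Topology Set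

theorem antitoneOn_div_self_of_mul_le {g : ℝ → ℝ}
    (hg : ∀ t, 0 < t → ∀ α, 1 < α → g (α * t) ≤ α * g t) :
    AntitoneOn (fun t => g t / t) (Ioi 0) := by
  intro a (ha : 0 < a) b (hb : 0 < b) hab
  rcases hab.eq_or_lt with rfl | hab
  · rfl
  have key := hg a ha (b / a) ((one_lt_div ha).2 hab)
  rw [div_mul_cancel₀ _ ha.ne'] at key
  calc g b / b ≤ b / a * g a / b := by gcongr
    _ = g a / a := by field_simp

theorem le_div_self_of_tendsto_of_mul_le {g : ℝ → ℝ} {L t : ℝ}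
    (hg : ∀ t, 0 < t → ∀ α, 1 < α → g (α * t) ≤ α * g t)
    (hL : Tendsto (fun t => g t / t) atTop (𝓝 L)) (ht : 0 < t) :
    L ≤ g t / t := by
  refine le_of_tendsto hL ?_
  filter_upwards [eventually_ge_atTop t] with s hs
  exact antitoneOn_div_self_of_mul_le hg ht (ht.trans_le hs) hs

theorem Filter.Tendsto.div_smul_const_smul {E : Type*} [AddCommGroup E] [Module ℝ E]
    {f : E → ℝ} {x : E} {L c : ℝ}
    (hL : Tendsto (fun h : ℝ => f (h • x) / h) atTop (𝓝 L)) (hc : 0 < c) :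
    Tendsto (fun h : ℝ => f (h • c • x) / h) atTop (𝓝 (c * L)) := by
  refine ((hL.comp (tendsto_id.atTop_mul_const hc)).const_mul c).congr fun h => ?_
  simp only [Function.comp, id, smul_smul]
  field_simp

theorem eventually_smul_le_nhdsWithin_nonneg {ι : Type*} [Finite ι] {x : ι → ℝ}
    (hx : 0 ≤ x) {c : ℝ} (hc : c < 1) : ∀ᶠ y in 𝓝[Ici 0] x, c • x ≤ y := by
  suffices ∀ i, ∀ᶠ y in 𝓝[Ici 0] x, c * x i ≤ y i from
    (eventually_all.2 this).mono fun y hy i => hy i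
  intro i
  rcases (hx i).eq_or_lt with hxi | hxi
  · filter_upwards [self_mem_nhdsWithin] with y (hy : 0 ≤ y)
    simpa [← hxi] using hy i
  · have hlt : c * x i < x i := by simpa using mul_lt_mul_of_pos_right hc hxi
    have hcoord : Tendsto (fun y : ι → ℝ => y i) (𝓝[Ici 0] x) (𝓝 (x i)) :=
      ((continuous_apply i).tendsto x).mono_left nhdsWithin_le_nhds
    exact (hcoord.eventually (lt_mem_nhds hlt)).mono fun y hy => hy.le

theorem MonotoneOn.lowerSemicontinuousWithinAt_Ici_of_homogeneous
    {ι : Type*} [Finite ι] {F : (ι → ℝ) → ℝ} (hmono : MonotoneOn F (Ici 0))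
    (hhom : ∀ x, 0 ≤ x → ∀ c, 0 < c → F (c • x) = c * F x)
    {x : ι → ℝ} (hx : 0 ≤ x) : LowerSemicontinuousWithinAt F (Ici 0) x := by
  intro a ha
  have hcont : Tendsto (fun c : ℝ => c * F x) (𝓝[<] 1) (𝓝 (F x)) := by
    simpa using ((continuous_mul_const (F x)).tendsto 1).mono_left nhdsWithin_le_nhds
  obtain ⟨c, hac, hc0, hc1⟩ :=
    ((hcont.eventually (lt_mem_nhds ha)).and (Ioo_mem_nhdsLT one_pos)).exists
  filter_upwards [eventually_smul_le_nhdsWithin_nonneg hx hc1, self_mem_nhdsWithin]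
    with y hcy hy
  calc a < c * F x := hac
    _ = F (c • x) := (hhom x hx c hc0).symm
    _ ≤ F y := hmono (smul_nonneg hc0.le hx) hy hcy

theorem upperSemicontinuousWithinAt_of_le_of_tendsto {α ι β : Type*} [TopologicalSpace α]
    [LinearOrder β] [TopologicalSpace β] [OrderTopology β] {l : Filter ι} [l.NeBot]
    {F : α → β} {g : ι → α → β} {s : Set α} {x : α}
    (hg : ∀ᶠ i in l, ContinuousWithinAt (g i) s x ∧ ∀ y ∈ s, F y ≤ g i y)
    (hlim : Tendsto (fun i => g i x) l (𝓝 (F x))) :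
    UpperSemicontinuousWithinAt F s x := by
  intro a ha
  obtain ⟨i, hga, hcont, hle⟩ := ((hlim.eventually (gt_mem_nhds ha)).and hg).exists
  filter_upwards [hcont.eventually (gt_mem_nhds hga), self_mem_nhdsWithin] with y hy hys
  exact (hle y hys).trans_lt hy

theorem stmt6_general {N : ℕ} (f : (Fin N → ℝ) → ℝ) (F : (Fin N → ℝ) → ℝ)
    (hscale : ∀ x : Fin N → ℝ, 0 ≤ x → ∀ α : ℝ, 1 < α → f (α • x) < α * f x)
    (hmono : ∀ x y : Fin N → ℝ, 0 ≤ y → y ≤ x → f y ≤ f x)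
    (hcont : ContinuousOn f {y : Fin N → ℝ | 0 ≤ y})
    (hF : ∀ x : Fin N → ℝ, 0 ≤ x → Tendsto (fun h : ℝ => f (h • x) / h) atTop (𝓝 (F x))) :
    ContinuousOn F {y : Fin N → ℝ | 0 ≤ y} := by
  have hscale_ray (x : Fin N → ℝ) (hx : 0 ≤ x) (t : ℝ) (ht : 0 < t) (α : ℝ)
      (hα : 1 < α) : f ((α * t) • x) ≤ α * f (t • x) := by
    simpa [mul_smul] using (hscale _ (smul_nonneg ht.le hx) α hα).le
  have hFmono : MonotoneOn F (Ici 0) := fun y hy x hx hyx =>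
    le_of_tendsto_of_tendsto (hF y hy) (hF x hx) <| (eventually_gt_atTop 0).mono fun h hh =>
      div_le_div_of_nonneg_right (hmono _ _ (smul_nonneg hh.le hy)
        (smul_le_smul_of_nonneg_left hyx hh.le)) hh.le
  have hFhom (x : Fin N → ℝ) (hx : 0 ≤ x) (c : ℝ) (hc : 0 < c) : F (c • x) = c * F x :=
    tendsto_nhds_unique (hF _ (smul_nonneg hc.le hx)) ((hF x hx).div_smul_const_smul hc)
  have hcont_div (h : ℝ) (hh : 0 < h) : ContinuousOn (fun y => f (h • y) / h) (Ici 0) :=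
    (hcont.comp (continuous_const_smul h).continuousOn
      fun y (hy : 0 ≤ y) => smul_nonneg hh.le hy).div_const h
  intro x (hx : 0 ≤ x)
  refine continuousWithinAt_iff_lower_upperSemicontinuousWithinAt.2
    ⟨hFmono.lowerSemicontinuousWithinAt_Ici_of_homogeneous hFhom hx,
      upperSemicontinuousWithinAt_of_le_of_tendsto (g := fun h y => f (h • y) / h) ?_ (hF x hx)⟩
  filter_upwards [eventually_gt_atTop 0] with h hh
  exact ⟨hcont_div h hh x hx,
    fun y hy => le_div_self_of_tendsto_of_mul_le (hscale_ray y hy) (hF y hy) hh⟩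

/-- If a standard interference function `f` is continuous on the nonnegative
orthant, then its asymptotic function `F x = lim_{h→∞} f (h • x) / h` is continuous on the
nonnegative orthant. -/
theorem stmt6 {N : ℕ} (f : (Fin N → ℝ) → ℝ) (F : (Fin N → ℝ) → ℝ)
    (hpos : ∀ x : Fin N → ℝ, 0 ≤ x → 0 < f x)
    (hscale : ∀ x : Fin N → ℝ, 0 ≤ x → ∀ α : ℝ, 1 < α → f (α • x) < α * f x)
    (hmono : ∀ x y : Fin N → ℝ, 0 ≤ y → y ≤ x → f y ≤ f x)
    (hcont : ContinuousOn f {y : Fin N → ℝ | 0 ≤ y})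
    (hF : ∀ x : Fin N → ℝ, 0 ≤ x → Tendsto (fun h : ℝ => f (h • x) / h) atTop (𝓝 (F x))) :
    ContinuousOn F {y : Fin N → ℝ | 0 ≤ y} :=
  stmt6_general f F hscale hmono hcont hF
end

section
/- If a standard interference function f is continuous on the nonnegative orthant, then for every x ≥ 0 and all sequences xₙ → x in ℝ₊^N and hₙ → ∞ in ℝ₊₊, lim_{n→∞} f(hₙxₙ)/hₙ = f_∞(x), where f_∞(x) = lim_{h→∞} f(hx)/h. -/
/-! For `y ≥ 0`, scalability makes `h ↦ f (h • y) / h` decreasing, so `F x` is its infimum.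
Upper bound: fix `h` with `f (h • x) / h` close to `F x`; once `hₙ ≥ h`,
`f (hₙ • xₙ) / hₙ ≤ f (h • xₙ) / h`, which tends to `f (h • x) / h` by continuity.
Lower bound: for each `a > 1` eventually `x ≤ a • xₙ`, so monotonicity and scalability give
`F x ≤ f (hₙ • x) / hₙ ≤ f (a • hₙ • xₙ) / hₙ < a * (f (hₙ • xₙ) / hₙ)`. -/

open Filter Topology

section Scalable

variable {E : Type*} [AddCommGroup E] [PartialOrder E] [Module ℝ E]

def IsScalable (f : E → ℝ) : Prop :=
  ∀ x : E, 0 ≤ x → ∀ α : ℝ, 1 < α → f (α • x) < α * f x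

variable [PosSMulMono ℝ E]

theorem IsScalable.antitoneOn_div {f : E → ℝ} (hf : IsScalable f) {y : E} (hy : 0 ≤ y) :
    AntitoneOn (fun h : ℝ => f (h • y) / h) (Set.Ioi 0) := by
  intro a (ha : 0 < a) b (hb : 0 < b) hab
  rcases hab.eq_or_lt with rfl | hlt
  · exact le_rfl
  have hscale := hf (a • y) (smul_nonneg ha.le hy) (b / a) ((one_lt_div ha).2 hlt)
  rw [smul_smul, div_mul_cancel₀ b ha.ne'] at hscale
  rw [div_le_div_iff₀ hb ha]
  calc f (b • y) * a ≤ b / a * f (a • y) * a := by gcongr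
    _ = f (a • y) * b := by field_simp

theorem IsScalable.le_div_of_tendsto {f : E → ℝ} (hf : IsScalable f) {y : E} (hy : 0 ≤ y)
    {L : ℝ} (hL : Tendsto (fun h : ℝ => f (h • y) / h) atTop (𝓝 L)) {h : ℝ} (hh : 0 < h) :
    L ≤ f (h • y) / h :=
  le_of_tendsto hL <| eventually_atTop.2
    ⟨h, fun _ hb => hf.antitoneOn_div hy hh (hh.trans_le hb) hb⟩

end Scalable

theorem eventually_le_smul_of_tendsto {α ι : Type*} [Finite ι] {l : Filter α}
    {xs : α → ι → ℝ} {x : ι → ℝ} (hxs : ∀ n, 0 ≤ xs n) (hlim : Tendsto xs l (𝓝 x))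
    {a : ℝ} (ha : 1 < a) : ∀ᶠ n in l, x ≤ a • xs n := by
  simp only [Pi.le_def, Pi.smul_apply, smul_eq_mul, eventually_all]
  intro i
  rcases le_or_gt (x i) 0 with hxi | hxi
  · exact .of_forall fun n => hxi.trans (mul_nonneg (by linarith) (hxs n i))
  · have : x i < a * x i := lt_mul_left hxi ha
    exact ((tendsto_pi_nhds.1 hlim i).const_mul a).eventually (eventually_gt_nhds this) |>.mono
      fun _ => le_of_lt

theorem IsScalable.eventually_lt_div {α ι : Type*} [Finite ι] {f : (ι → ℝ) → ℝ}
    (hf : IsScalable f) (hmono : ∀ x y : ι → ℝ, 0 ≤ y → y ≤ x → f y ≤ f x)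
    {x : ι → ℝ} (hx : 0 ≤ x) {L : ℝ} (hL : Tendsto (fun h : ℝ => f (h • x) / h) atTop (𝓝 L))
    {l : Filter α} {xs : α → ι → ℝ} {hs : α → ℝ} (hxs : ∀ n, 0 ≤ xs n)
    (hlim : Tendsto xs l (𝓝 x)) (hs_pos : ∀ n, 0 < hs n) {c : ℝ} (hc : c < L) :
    ∀ᶠ n in l, c < f (hs n • xs n) / hs n := by
  have hnear : ∀ᶠ a in 𝓝[>] (1 : ℝ), a * c < L :=
    (((continuous_id.mul continuous_const).tendsto' 1 c (one_mul c)).mono_left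
      nhdsWithin_le_nhds).eventually (eventually_lt_nhds hc)
  obtain ⟨a, hac, ha : 1 < a⟩ := (hnear.and self_mem_nhdsWithin).exists
  filter_upwards [eventually_le_smul_of_tendsto hxs hlim ha] with n hn
  have hh := hs_pos n
  have hle : hs n • x ≤ a • hs n • xs n := by
    rw [smul_comm]; exact smul_le_smul_of_nonneg_left hn hh.le
  have hscale := hf _ (smul_nonneg hh.le (hxs n)) a ha
  refine lt_of_mul_lt_mul_left ?_ (zero_le_one.trans ha.le)
  calc a * c < L := hac
    _ ≤ f (hs n • x) / hs n := hf.le_div_of_tendsto hx hL hh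
    _ ≤ f (a • hs n • xs n) / hs n := by
      gcongr; exact hmono _ _ (smul_nonneg hh.le hx) hle
    _ ≤ a * f (hs n • xs n) / hs n := by gcongr
    _ = a * (f (hs n • xs n) / hs n) := mul_div_assoc _ _ _

theorem IsScalable.eventually_div_lt {α E : Type*} [AddCommGroup E] [PartialOrder E]
    [Module ℝ E] [PosSMulMono ℝ E] [TopologicalSpace E] [ContinuousConstSMul ℝ E]
    {f : E → ℝ} (hf : IsScalable f) (hcont : ContinuousOn f {y : E | 0 ≤ y})
    {x : E} (hx : 0 ≤ x) {L : ℝ} (hL : Tendsto (fun h : ℝ => f (h • x) / h) atTop (𝓝 L))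
    {l : Filter α} {xs : α → E} {hs : α → ℝ} (hxs : ∀ n, 0 ≤ xs n)
    (hlim : Tendsto xs l (𝓝 x)) (hs_top : Tendsto hs l atTop) {c : ℝ} (hc : L < c) :
    ∀ᶠ n in l, f (hs n • xs n) / hs n < c := by
  obtain ⟨h, hfh, hh⟩ :=
    ((hL.eventually (eventually_lt_nhds hc)).and (eventually_gt_atTop 0)).exists
  have hlim' : Tendsto (fun n => f (h • xs n) / h) l (𝓝 (f (h • x) / h)) :=
    ((hcont _ (smul_nonneg hh.le hx)).tendsto.comp (tendsto_nhdsWithin_iff.2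
      ⟨hlim.const_smul h, .of_forall fun n => smul_nonneg hh.le (hxs n)⟩)).div_const h
  filter_upwards [hlim'.eventually (eventually_lt_nhds hfh), hs_top.eventually_ge_atTop h]
    with n hlt hge
  exact (hf.antitoneOn_div (hxs n) hh (hh.trans_le hge) hge).trans_lt hlt

theorem stmt7_general {N : ℕ} (f : (Fin N → ℝ) → ℝ) (F : (Fin N → ℝ) → ℝ)
    (hscale : ∀ x : Fin N → ℝ, 0 ≤ x → ∀ α : ℝ, 1 < α → f (α • x) < α * f x)
    (hmono : ∀ x y : Fin N → ℝ, 0 ≤ y → y ≤ x → f y ≤ f x)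
    (hcont : ContinuousOn f {y : Fin N → ℝ | 0 ≤ y})
    (hF : ∀ x : Fin N → ℝ, 0 ≤ x → Tendsto (fun h : ℝ => f (h • x) / h) atTop (𝓝 (F x))) :
    ∀ x : Fin N → ℝ, 0 ≤ x →
      ∀ (xs : ℕ → Fin N → ℝ) (hs : ℕ → ℝ),
        (∀ n, 0 ≤ xs n) → Tendsto xs atTop (𝓝 x) →
        (∀ n, 0 < hs n) → Tendsto hs atTop atTop →
        Tendsto (fun n => f (hs n • xs n) / hs n) atTop (𝓝 (F x)) := by
  intro x hx xs hs hxs hlim hs_pos hs_top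
  have hf : IsScalable f := hscale
  exact tendsto_order.2
    ⟨fun _ hc => hf.eventually_lt_div hmono hx (hF x hx) hxs hlim hs_pos hc,
      fun _ hc => hf.eventually_div_lt hcont hx (hF x hx) hxs hlim hs_top hc⟩

/-- If a standard interference function `f` is continuous on the nonnegative
orthant, then for every `x ≥ 0` and all sequences `xₙ → x` in the nonnegative orthant and
`hₙ → ∞` in `ℝ₊₊`, we have `f (hₙ • xₙ) / hₙ → F x`, where `F x = lim_{h→∞} f (h • x)/h`. -/
theorem stmt7 {N : ℕ} (f : (Fin N → ℝ) → ℝ) (F : (Fin N → ℝ) → ℝ)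
    (hpos : ∀ x : Fin N → ℝ, 0 ≤ x → 0 < f x)
    (hscale : ∀ x : Fin N → ℝ, 0 ≤ x → ∀ α : ℝ, 1 < α → f (α • x) < α * f x)
    (hmono : ∀ x y : Fin N → ℝ, 0 ≤ y → y ≤ x → f y ≤ f x)
    (hcont : ContinuousOn f {y : Fin N → ℝ | 0 ≤ y})
    (hF : ∀ x : Fin N → ℝ, 0 ≤ x → Tendsto (fun h : ℝ => f (h • x) / h) atTop (𝓝 (F x))) :
    ∀ x : Fin N → ℝ, 0 ≤ x →
      ∀ (xs : ℕ → Fin N → ℝ) (hs : ℕ → ℝ),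
        (∀ n, 0 ≤ xs n) → Tendsto xs atTop (𝓝 x) →
        (∀ n, 0 < hs n) → Tendsto hs atTop atTop →
        Tendsto (fun n => f (hs n • xs n) / hs n) atTop (𝓝 (F x)) :=
  stmt7_general f F hscale hmono hcont hF
end

section
/- Let f : ℝ₊^N → ℝ be concave on the nonnegative orthant with f(x) > 0 for all x ≥ 0. Then f satisfies scalability: for all x ≥ 0 and α > 1, α·f(x) > f(αx). -/
open Filter Topology

/-- Any function `f` that is concave on the nonnegative orthant and strictly
positive there satisfies the scalability property: for all `x ≥ 0` and `α > 1`,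
`α * f x > f (α • x)`. -/
theorem stmt9 {N : ℕ} (f : (Fin N → ℝ) → ℝ)
    (hconc : ConcaveOn ℝ {y : Fin N → ℝ | 0 ≤ y} f)
    (hpos : ∀ x : Fin N → ℝ, 0 ≤ x → 0 < f x) :
    ∀ x : Fin N → ℝ, 0 ≤ x → ∀ α : ℝ, 1 < α → f (α • x) < α * f x := by
  intro x hx α hα
  have hα0 : 0 < α := lt_trans one_pos hα
  have hax : (0 : Fin N → ℝ) ≤ α • x := by
    intro i; exact mul_nonneg hα0.le (hx i)
  have h0 : (0 : Fin N → ℝ) ∈ {y : Fin N → ℝ | 0 ≤ y} := fun i => le_rfl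
  have ha : (0:ℝ) ≤ 1/α := by positivity
  have hb : (0:ℝ) < 1 - 1/α := by
    have : 1/α < 1 := by
      rw [div_lt_one hα0]; exact hα
    linarith
  have hab : 1/α + (1 - 1/α) = 1 := by ring
  have key := hconc.2 hax h0 ha hb.le hab
  have heq : (1/α) • (α • x) + (1 - 1/α) • (0 : Fin N → ℝ) = x := by
    rw [smul_zero, add_zero, smul_smul, one_div_mul_cancel hα0.ne', one_smul]
  rw [heq] at key
  simp only [smul_eq_mul] at key
  have hf0 : 0 < f 0 := hpos 0 le_rfl
  have : (1/α) * f (α • x) < f x := by nlinarith [mul_pos hb hf0]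
  calc f (α • x) = α * ((1/α) * f (α • x)) := by field_simp
    _ < α * f x := by
        exact mul_lt_mul_of_pos_left this hα0
end
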